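/- For every n ≥ 1, all x_1,…,x_n, and every permutation σ of {1,…,n}, the fixed-boundary colored partition function at t = 1 factorizes as Z̃^σ_n(x_1,…,x_n|1) = ∏_{i=1}^n h_{σ(i)−1}(x_{n−i+1}, x_{n−i+2}, …, x_n), where h_m is the complete homogeneous symmetric polynomial of degree m. -/

import Mathlib

/-!
At `t = 1` the vertex weight no longer couples the colours: it is the product over the colours of
single-colour weights (`x` for an east step, `1` otherwise), and the admissibility conditions also
hold colour by colour. So `Z̃^σ_n(x | 1)` is the product over the colours of single-colour
partition functions. Colour `c` is an up-right lattice path entering in row `n - 1 - c` and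
leaving through the top of column `σ c`. Such a path is determined by the weakly increasing rows
of its `σ c` east steps, all among the top `c + 1` rows, and its weight is the product of the
`x`-variables of these rows, a monomial of `h_{σ c}`.
-/

open Finset

/-- `d(s_N, s_E)` = number of pairs `(i,j)` with `i < j`, `i ∈ s_E`, `j ∈ s_N ∪ s_E`. -/
def dNE {n : ℕ} (sN sE : Finset (Fin n)) : ℕ :=
  (Finset.univ.filter fun p : Fin n × Fin n => p.1 < p.2 ∧ p.1 ∈ sE ∧ p.2 ∈ sN ∪ sE).card

/-- Colored vertex weight `w̃(s_W,s_S,s_N,s_E; x, t) = x^{|s_E|} t^{d(s_N,s_E)}` when the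
configuration is admissible, and `0` otherwise. -/
def coloredVertexW {R : Type*} [CommRing R] {n : ℕ} (x t : R)
    (sW sS sN sE : Finset (Fin n)) : R :=
  if sS ∩ sW = ∅ ∧ sN ∩ sE = ∅ ∧ sN ∪ sE = sS ∪ sW then
    x ^ sE.card * t ^ dNE sN sE
  else 0

/-- Weight of a colored configuration on the `n × n` grid (rows bottom-to-top, row `i`
uses parameter `x i`). -/
def coloredConfigW {R : Type*} [CommRing R] {n : ℕ} (x : Fin n → R) (t : R)
    (H : Fin n → Fin (n + 1) → Finset (Fin n))
    (V : Fin (n + 1) → Fin n → Finset (Fin n)) : R :=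
  ∏ i : Fin n, ∏ j : Fin n,
    coloredVertexW (x i) t (H i j.castSucc) (V i.castSucc j) (V i.succ j) (H i j.succ)

/-- Fixed-boundary colored domain-wall partition function `Z̃^σ_n(x|t)`. -/
def coloredZperm {R : Type*} [CommRing R] (n : ℕ) (x : Fin n → R) (t : R)
    (σ : Equiv.Perm (Fin n)) : R :=
  ∑ c ∈ (Finset.univ : Finset ((Fin n → Fin (n + 1) → Finset (Fin n)) ×
        (Fin (n + 1) → Fin n → Finset (Fin n)))).filter
      (fun c => (∀ i : Fin n, c.1 i 0 = {Fin.rev i}) ∧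
        (∀ i : Fin n, c.1 i (Fin.last n) = ∅) ∧
        (∀ j : Fin n, c.2 0 j = ∅) ∧
        (∀ a : Fin n, c.2 (Fin.last n) (σ a) = {a})),
    coloredConfigW x t c.1 c.2

/-- The complete homogeneous symmetric polynomial of degree `m` in the variables
`v 0, …, v (k-1)`. -/
def hsym {R : Type*} [CommRing R] (m : ℕ) {k : ℕ} (v : Fin k → R) : R :=
  ∑ f ∈ (Finset.univ : Finset (Fin m → Fin k)).filter
      (fun f => ∀ a b : Fin m, a ≤ b → f a ≤ f b),
    ∏ i, v (f i)


theorem Bool.toNat_decide (p : Prop) [Decidable p] : (decide p).toNat = if p then 1 else 0 := by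
  by_cases p <;> simp [*]

theorem Bool.toNat_injective : Function.Injective Bool.toNat := by
  decide

theorem Fin.sum_toNat_decide_val_eq {n : ℕ} (b : ℕ) :
    ∑ i : Fin n, (decide ((i : ℕ) = b)).toNat = if b < n then 1 else 0 := by
  split_ifs with hb
  · rw [Finset.sum_eq_single ⟨b, hb⟩] <;> simp [Fin.ext_iff]
  · exact Finset.sum_eq_zero fun i _ => by simp only [Bool.toNat_decide]; split_ifs <;> omega

theorem Fin.exists_eq_decide_of_sum_toNat_le_one {n : ℕ} (p : Fin n → Bool)
    (h : ∑ i, (p i).toNat ≤ 1) :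
    ∃ b ≤ n, ∀ i, p i = decide ((i : ℕ) = b) := by
  by_cases hex : ∃ i, p i = true
  · obtain ⟨i, hi⟩ := hex
    refine ⟨i, i.isLt.le, fun i' => ?_⟩
    by_cases hii : i' = i
    · simp [hii, hi]
    · have := Finset.add_le_sum (f := fun i => (p i).toNat) (fun _ _ => Nat.zero_le _)
        (Finset.mem_univ i) (Finset.mem_univ i') (Ne.symm hii)
      cases hp : p i'
      · simp [Fin.val_inj, hii]
      · simp only [hi, hp, Bool.toNat_true] at this
        omega
  · push Not at hex
    exact ⟨n, le_rfl, fun i => by simp [hex i, i.isLt.ne]⟩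

namespace ColoredVertexModel

abbrev ColoredConfig (n : ℕ) :=
  (Fin n → Fin (n + 1) → Finset (Fin n)) × (Fin (n + 1) → Fin n → Finset (Fin n))

/-- A configuration of a single colour: `y.1 i j` is the horizontal edge of row `i` on the
vertical line `j`, `y.2 k j` the vertical edge of column `j` on the horizontal line `k`. -/
abbrev PathConfig (n : ℕ) := (Fin n → Fin (n + 1) → Bool) × (Fin (n + 1) → Fin n → Bool)

def PathVertexOK (w s nn e : Bool) : Prop :=
  s.toNat + w.toNat = nn.toNat + e.toNat ∧ s.toNat + w.toNat ≤ 1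

instance (w s nn e : Bool) : Decidable (PathVertexOK w s nn e) := by
  unfold PathVertexOK; infer_instance

def pathVertexW {R : Type*} [CommMonoidWithZero R] (x : R) (w s nn e : Bool) : R :=
  if PathVertexOK w s nn e then (if e then x else 1) else 0

theorem coloredVertex_admissible_iff {n : ℕ} (sW sS sN sE : Finset (Fin n)) :
    (sS ∩ sW = ∅ ∧ sN ∩ sE = ∅ ∧ sN ∪ sE = sS ∪ sW) ↔
      ∀ c, PathVertexOK (c ∈ sW) (c ∈ sS) (c ∈ sN) (c ∈ sE) := by
  have hc : ∀ c, PathVertexOK (c ∈ sW) (c ∈ sS) (c ∈ sN) (c ∈ sE) ↔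
      ¬(c ∈ sS ∧ c ∈ sW) ∧ ¬(c ∈ sN ∧ c ∈ sE) ∧ (c ∈ sN ∨ c ∈ sE ↔ c ∈ sS ∨ c ∈ sW) := by
    intro c
    by_cases c ∈ sW <;> by_cases c ∈ sS <;> by_cases c ∈ sN <;> by_cases c ∈ sE <;>
      simp_all [PathVertexOK]
  simp only [hc, forall_and, Finset.mem_inter, Finset.notMem_empty, iff_false, Finset.ext_iff,
    Finset.mem_union]

theorem coloredVertexW_one {R : Type*} [CommRing R] {n : ℕ} (x : R)
    (sW sS sN sE : Finset (Fin n)) :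
    coloredVertexW x 1 sW sS sN sE = ∏ c, pathVertexW x (c ∈ sW) (c ∈ sS) (c ∈ sN) (c ∈ sE) := by
  simp only [coloredVertexW, pathVertexW, one_pow, mul_one, Finset.prod_ite_zero,
    Finset.mem_univ, true_implies, coloredVertex_admissible_iff, decide_eq_true_eq,
    Fintype.prod_ite_mem, Finset.prod_const]

namespace PathConfig

variable {n : ℕ}

def weight {R : Type*} [CommMonoidWithZero R] (x : Fin n → R) (y : PathConfig n) : R :=
  ∏ i : Fin n, ∏ j : Fin n,
    pathVertexW (x i) (y.1 i j.castSucc) (y.2 i.castSucc j) (y.2 i.succ j) (y.1 i j.succ)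

def Admissible (y : PathConfig n) : Prop :=
  ∀ i j : Fin n, PathVertexOK (y.1 i j.castSucc) (y.2 i.castSucc j) (y.2 i.succ j) (y.1 i j.succ)

instance : DecidablePred (Admissible (n := n)) := fun _ => by
  unfold Admissible; infer_instance

/-- Entry on the west boundary in row `Fin.rev c = n - 1 - c`, exit through the top of
column `m`. -/
def HasBoundary (c m : Fin n) (y : PathConfig n) : Prop :=
  (∀ i, y.1 i 0 = decide (i = Fin.rev c)) ∧ (∀ i, y.1 i (Fin.last n) = false) ∧
    (∀ j, y.2 0 j = false) ∧ (∀ j, y.2 (Fin.last n) j = decide (j = m))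

instance (c m : Fin n) : DecidablePred (HasBoundary c m) := fun _ => by
  unfold HasBoundary; infer_instance

theorem weight_eq {R : Type*} [CommMonoidWithZero R] (x : Fin n → R) (y : PathConfig n) :
    y.weight x =
      if y.Admissible then ∏ i : Fin n, ∏ j : Fin n, (if y.1 i j.succ then x i else 1) else 0 := by
  simp only [weight, pathVertexW, Finset.prod_ite_zero, Finset.mem_univ, true_implies,
    Admissible]

/-- The path whose horizontal edge on the vertical line `j` lies in row `ρ j`; a value
`ρ j ≥ n` encodes a line without horizontal edge. -/
def ofRows (ρ : Fin (n + 1) → ℕ) : PathConfig n :=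
  (fun i j => decide ((i : ℕ) = ρ j), fun k j => decide (ρ j.castSucc < k ∧ (k : ℕ) ≤ ρ j.succ))

theorem ofRows_admissible {ρ : Fin (n + 1) → ℕ} (hρ : Monotone ρ) : (ofRows ρ).Admissible := by
  intro i j
  have := Fin.monotone_iff_le_succ.mp hρ j
  simp only [PathVertexOK, ofRows, Bool.toNat_decide, Fin.val_castSucc, Fin.val_succ]
  split_ifs <;> omega

theorem ofRows_hasBoundary {ρ : Fin (n + 1) → ℕ} {c m : Fin n} (h0 : ρ 0 = n - 1 - c)
    (hlt : ∀ j, ρ j < n ↔ (j : ℕ) ≤ m) : (ofRows ρ).HasBoundary c m := by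
  refine ⟨fun i => ?_, fun i => ?_, fun j => ?_, fun j => ?_⟩
  · simp only [ofRows, decide_eq_decide, Fin.ext_iff, Fin.val_rev, h0]
    omega
  · have := hlt (Fin.last n)
    simp only [ofRows, decide_eq_false_iff_not, Fin.val_last] at this ⊢
    omega
  · simp [ofRows]
  · have h1 := hlt j.castSucc
    have h2 := hlt j.succ
    simp only [ofRows, decide_eq_decide, Fin.ext_iff, Fin.val_last, Fin.val_castSucc,
      Fin.val_succ] at h1 h2 ⊢
    omega

theorem weight_ofRows {R : Type*} [CommMonoidWithZero R] (x : Fin n → R) {ρ : Fin (n + 1) → ℕ}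
    (hρ : Monotone ρ) :
    (ofRows ρ).weight x = ∏ j : Fin n, if h : ρ j.succ < n then x ⟨ρ j.succ, h⟩ else 1 := by
  rw [weight_eq, if_pos (ofRows_admissible hρ), Finset.prod_comm]
  refine Finset.prod_congr rfl fun j _ => ?_
  split_ifs with h
  · rw [Finset.prod_eq_single ⟨ρ j.succ, h⟩] <;> simp +contextual [ofRows, Fin.ext_iff]
  · exact Finset.prod_eq_one fun i _ => if_neg (by simp only [ofRows, decide_eq_true_eq]; omega)

/-- Summing the vertex relations `s + w = nn + e` over a column telescopes the vertical edges. -/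
theorem sum_east_add_top {y : PathConfig n} (hy : y.Admissible) (j : Fin n)
    (h0 : y.2 0 j = false) :
    ∑ i, (y.1 i j.succ).toNat + (y.2 (Fin.last n) j).toNat = ∑ i, (y.1 i j.castSucc).toNat := by
  have hvertical : ∑ i : Fin n, (y.2 i.castSucc j).toNat + (y.2 (Fin.last n) j).toNat =
      ∑ i : Fin n, (y.2 i.succ j).toNat := by
    rw [← Fin.sum_univ_castSucc (fun k => (y.2 k j).toNat), Fin.sum_univ_succ, h0,
      Bool.toNat_false, zero_add]
  have hvertex : ∑ i, ((y.2 i.castSucc j).toNat + (y.1 i j.castSucc).toNat) =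
      ∑ i, ((y.2 i.succ j).toNat + (y.1 i j.succ).toNat) :=
    Finset.sum_congr rfl fun i _ => (hy i j).1
  rw [Finset.sum_add_distrib, Finset.sum_add_distrib] at hvertex
  omega

section Column

variable {y : PathConfig n} {j : Fin n} {a b : ℕ}

theorem vertical_toNat_add (hy : y.Admissible) (h0 : y.2 0 j = false)
    (ha : ∀ i, y.1 i j.castSucc = decide ((i : ℕ) = a))
    (hb : ∀ i, y.1 i j.succ = decide ((i : ℕ) = b)) (k : Fin (n + 1)) :
    (y.2 k j).toNat + (decide (b < k)).toNat = (decide (a < k)).toNat := by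
  induction k using Fin.induction with
  | zero => simp [h0]
  | succ k ih =>
    have hk := (hy k j).1
    rw [ha, hb] at hk
    simp only [Bool.toNat_decide, Fin.val_castSucc, Fin.val_succ] at hk ih ⊢
    split_ifs at hk ih ⊢ <;> omega

theorem le_and_vertical_eq (hy : y.Admissible) (h0 : y.2 0 j = false) (han : a ≤ n)
    (ha : ∀ i, y.1 i j.castSucc = decide ((i : ℕ) = a))
    (hb : ∀ i, y.1 i j.succ = decide ((i : ℕ) = b)) :
    a ≤ b ∧ ∀ k, y.2 k j = decide (a < k ∧ (k : ℕ) ≤ b) := by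
  have hflux := vertical_toNat_add hy h0 ha hb
  have hab : a ≤ b := by
    by_contra! hba
    have := hflux ⟨b + 1, by omega⟩
    simp only [Bool.toNat_decide] at this
    split_ifs at this <;> omega
  refine ⟨hab, fun k => Bool.toNat_injective ?_⟩
  have := hflux k
  simp only [Bool.toNat_decide] at this ⊢
  split_ifs at this ⊢ <;> omega

end Column

/-- By `sum_east_add_top`, the number of horizontal edges on a vertical line stays `1` until the
exit column, after which it drops to `0`. -/
theorem exists_row {y : PathConfig n} {c m : Fin n} (hy : y.Admissible)
    (hbd : y.HasBoundary c m) (j : Fin (n + 1)) :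
    ∃ b ≤ n, (b < n ↔ (j : ℕ) ≤ m) ∧ ∀ i, y.1 i j = decide ((i : ℕ) = b) := by
  obtain ⟨hwest, -, hbottom, htop⟩ := hbd
  induction j using Fin.induction with
  | zero =>
    refine ⟨n - 1 - c, by omega, by simp only [Fin.val_zero]; omega, fun i => ?_⟩
    rw [hwest, decide_eq_decide, Fin.ext_iff, Fin.val_rev]
    omega
  | succ j ih =>
    obtain ⟨a, -, hak, ha⟩ := ih
    have hsum := sum_east_add_top hy j (hbottom j)
    simp only [ha, Fin.sum_toNat_decide_val_eq] at hsum
    simp only [htop, Bool.toNat_decide] at hsum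
    obtain ⟨b, hbn, hb⟩ := Fin.exists_eq_decide_of_sum_toNat_le_one (fun i => y.1 i j.succ)
      (by split_ifs at hsum <;> omega)
    refine ⟨b, hbn, ?_, hb⟩
    simp only [hb, Fin.sum_toNat_decide_val_eq] at hsum
    simp only [Fin.ext_iff, Fin.val_castSucc] at hsum hak
    simp only [Fin.val_succ]
    split_ifs at hsum <;> omega

theorem eq_ofRows {y : PathConfig n} {c m : Fin n} (hy : y.Admissible)
    (hbd : y.HasBoundary c m) :
    ∃ ρ : Fin (n + 1) → ℕ, Monotone ρ ∧ ρ 0 = n - 1 - c ∧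
      (∀ j, ρ j ≤ n ∧ (ρ j < n ↔ (j : ℕ) ≤ m)) ∧ y = ofRows ρ := by
  choose ρ hρn hρm hρ using exists_row hy hbd
  have hcolumn := fun j => le_and_vertical_eq hy (hbd.2.2.1 j) (hρn _) (hρ j.castSucc) (hρ j.succ)
  refine ⟨ρ, Fin.monotone_iff_le_succ.mpr fun j => (hcolumn j).1, ?_,
    fun j => ⟨hρn j, hρm j⟩, ?_⟩
  · have hrow := hρ 0 ⟨ρ 0, by simpa using hρm 0⟩
    simp only [hbd.1, decide_true, decide_eq_true_eq, Fin.ext_iff, Fin.val_rev] at hrow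
    omega
  · ext : 1
    · funext i j
      exact hρ j i
    · funext k j
      exact (hcolumn j).2 k

end PathConfig

/-- The rows `r, r + f 0, …, r + f (m - 1)` on successive vertical lines of the path whose `i`-th
east step lies in row `r + f i`; beyond the exit column the value `r + k` encodes "no row". -/
def pathRows {m k : ℕ} (r : ℕ) (f : Fin m → Fin k) : ℕ → ℕ
  | 0 => r
  | j + 1 => r + if h : j < m then (f ⟨j, h⟩ : ℕ) else k

section pathRows

variable {m k r : ℕ} {f : Fin m → Fin k}

theorem pathRows_monotone (hf : Monotone f) : Monotone (pathRows r f) := by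
  refine monotone_nat_of_le_succ fun j => ?_
  cases j with
  | zero => simp [pathRows]
  | succ j =>
    simp only [pathRows]
    split_ifs with h1 h2
    · exact Nat.add_le_add_left (hf (Fin.mk_le_mk.mpr j.le_succ)) r
    · have := (f ⟨j, h1⟩).isLt
      omega
    · omega
    · exact le_rfl

theorem pathRows_lt_iff (hk : 0 < k) (j : ℕ) : pathRows r f j < r + k ↔ j ≤ m := by
  cases j with
  | zero => simpa [pathRows]
  | succ j =>
    simp only [pathRows]
    split_ifs with h
    · have := (f ⟨j, h⟩).isLt
      omega
    · omega

theorem prod_pathRows {R : Type*} [CommMonoid R] {n : ℕ} (x : Fin n → R) (hrk : r + k = n)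
    (hm : m ≤ n) :
    ∏ j : Fin n, (if h : pathRows r f (j + 1) < n then x ⟨_, h⟩ else 1) =
      ∏ i : Fin m, x ⟨r + f i, by have := (f i).isLt; omega⟩ := by
  symm
  refine Finset.prod_of_injOn (Fin.castLE hm) (Fin.castLE_injective hm).injOn
    (fun _ _ => Finset.mem_coe.mpr (Finset.mem_univ _)) (fun j _ hj => ?_) (fun i _ => ?_)
  · have hjm : m ≤ j := by
      by_contra! hjm
      exact hj ⟨⟨j, hjm⟩, Finset.mem_coe.mpr (Finset.mem_univ _), rfl⟩
    rw [dif_neg]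
    simp only [pathRows, dif_neg (not_lt.mpr hjm)]
    omega
  · have hrow : pathRows r f (Fin.castLE hm i + 1) = r + f i := by simp [pathRows]
    have := (f i).isLt
    simp only [hrow]
    rw [dif_pos (by omega)]

theorem exists_pathRows_eq {n : ℕ} (hrk : r + k = n) (hm : m < n) {ρ : Fin (n + 1) → ℕ}
    (hρ : Monotone ρ) (h0 : ρ 0 = r) (hρn : ∀ j, ρ j ≤ n ∧ (ρ j < n ↔ (j : ℕ) ≤ m)) :
    ∃ f : Fin m → Fin k, Monotone f ∧ ∀ j : Fin (n + 1), pathRows r f j = ρ j := by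
  have hr : ∀ j, r ≤ ρ j := fun j => h0 ▸ hρ (Fin.zero_le j)
  have hlt : ∀ i : Fin m, ρ ⟨i + 1, by omega⟩ - r < k := fun i => by
    have := (hρn ⟨i + 1, by omega⟩).2.mpr i.isLt
    have := hr ⟨i + 1, by omega⟩
    omega
  refine ⟨fun i => ⟨ρ ⟨i + 1, by omega⟩ - r, hlt i⟩, fun a b hab => ?_, fun j => ?_⟩
  · have : ρ ⟨a + 1, by omega⟩ ≤ ρ ⟨b + 1, by omega⟩ :=
      hρ (Fin.mk_le_mk.mpr (Nat.add_le_add_right hab 1))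
    exact Fin.mk_le_mk.mpr (by omega)
  · obtain ⟨j, hj⟩ := j
    cases j with
    | zero => exact h0.symm
    | succ j =>
      have := hr ⟨j + 1, hj⟩
      have := hρn ⟨j + 1, hj⟩
      dsimp only at this
      simp only [pathRows]
      split_ifs <;> omega

end pathRows

/-- The bijection `f ↦ ofRows (pathRows (n - 1 - c) f)` between the weakly increasing
`f : Fin m → Fin (c + 1)` and the admissible paths with this boundary. -/
theorem sum_weight_hasBoundary {R : Type*} [CommRing R] {n : ℕ} (x : Fin n → R) (c m : Fin n) :
    ∑ y : PathConfig n with y.HasBoundary c m, y.weight x =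
      hsym m (fun k : Fin (c + 1) => x ⟨n - 1 - c + k, by omega⟩) := by
  have hrk : n - 1 - c + (c + 1) = n := by omega
  rw [← Finset.sum_filter_of_ne (p := PathConfig.Admissible) fun y _ hy => by
    rw [PathConfig.weight_eq] at hy
    by_contra h
    exact hy (if_neg h)]
  symm
  refine Finset.sum_bij (fun f _ => PathConfig.ofRows fun j => pathRows (n - 1 - c) f j)
    (fun f hf => ?_) (fun f₁ _ f₂ _ h => ?_) (fun y hy => ?_) (fun f hf => ?_)
  · simp only [Finset.mem_filter, Finset.mem_univ, true_and] at hf ⊢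
    refine ⟨PathConfig.ofRows_hasBoundary rfl fun j => ?_, PathConfig.ofRows_admissible
      ((pathRows_monotone hf).comp Fin.val_strictMono.monotone)⟩
    rw [← pathRows_lt_iff (Nat.succ_pos c), hrk]
  · funext i
    have hrow := congrFun (congrFun (congrArg Prod.fst h) ⟨n - 1 - c + f₁ i, by omega⟩)
      ⟨i + 1, by omega⟩
    simp only [PathConfig.ofRows, pathRows, Fin.val_succ, i.isLt, dif_pos, decide_true,
      true_eq_decide_iff, Nat.add_left_cancel_iff] at hrow
    exact Fin.ext hrow
  · simp only [Finset.mem_filter, Finset.mem_univ, true_and] at hy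
    obtain ⟨ρ, hρ, h0, hρn, rfl⟩ := PathConfig.eq_ofRows hy.2 hy.1
    obtain ⟨f, hf, hfρ⟩ := exists_pathRows_eq hrk m.isLt hρ h0 hρn
    exact ⟨f, Finset.mem_filter.mpr ⟨Finset.mem_univ _, fun a b hab => hf hab⟩,
      by simp only [hfρ]⟩
  · simp only [Finset.mem_filter, Finset.mem_univ, true_and] at hf
    rw [PathConfig.weight_ofRows x (ρ := fun j => pathRows (n - 1 - c) f j)
      ((pathRows_monotone hf).comp Fin.val_strictMono.monotone)]
    simp only [Fin.val_succ]
    exact (prod_pathRows x hrk m.isLt.le).symm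

def colorSlices {n : ℕ} : ColoredConfig n ≃ (Fin n → PathConfig n) where
  toFun HV c := (fun i j => decide (c ∈ HV.1 i j), fun k j => decide (c ∈ HV.2 k j))
  invFun y := (fun i j => {c | (y c).1 i j}, fun k j => {c | (y c).2 k j})
  left_inv HV := by ext <;> simp
  right_inv y := by ext <;> simp

theorem coloredConfigW_one {R : Type*} [CommRing R] {n : ℕ} (x : Fin n → R)
    (HV : ColoredConfig n) :
    coloredConfigW x 1 HV.1 HV.2 = ∏ c, (colorSlices HV c).weight x := by
  simp only [coloredConfigW, coloredVertexW_one, PathConfig.weight]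
  rw [Finset.prod_congr rfl fun i _ => Finset.prod_comm, Finset.prod_comm]
  rfl

theorem domainWall_iff_forall_hasBoundary {n : ℕ} (σ : Equiv.Perm (Fin n))
    (HV : ColoredConfig n) :
    ((∀ i, HV.1 i 0 = {Fin.rev i}) ∧ (∀ i, HV.1 i (Fin.last n) = ∅) ∧ (∀ j, HV.2 0 j = ∅) ∧
        (∀ a, HV.2 (Fin.last n) (σ a) = {a})) ↔
      ∀ c, (colorSlices HV c).HasBoundary c (σ c) := by
  simp only [PathConfig.HasBoundary, colorSlices, Equiv.coe_fn_mk, decide_eq_decide,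
    decide_eq_false_iff_not, forall_and, Finset.ext_iff, Finset.mem_singleton,
    Finset.notMem_empty, iff_false]
  refine and_congr (forall_comm.trans ?_) (and_congr forall_comm (and_congr forall_comm ?_))
  · exact forall_congr' fun a => forall_congr' fun i => iff_congr Iff.rfl
      (eq_comm.trans Fin.rev_eq_iff)
  · constructor
    · intro h b j
      rw [← σ.apply_symm_apply j, h, σ.apply_symm_apply, Equiv.eq_symm_apply, eq_comm]
    · intro h a b
      rw [h, eq_comm, σ.injective.eq_iff]

end ColoredVertexModel

open ColoredVertexModel in
/-- Colour `c : Fin n` is the paper's colour `c + 1`, so its factor involves the top `c + 1`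
variables. -/
theorem coloredZperm_t_one {R : Type*} [CommRing R] (n : ℕ) (x : Fin n → R)
    (σ : Equiv.Perm (Fin n)) :
    coloredZperm n x 1 σ =
      ∏ c : Fin n, hsym ((σ c : ℕ))
        (fun m : Fin ((c : ℕ) + 1) => x ⟨n - 1 - (c : ℕ) + (m : ℕ), by
          have hc := c.isLt; have hm := m.isLt; omega⟩) := by
  calc coloredZperm n x 1 σ
      = ∑ y ∈ Fintype.piFinset fun c => {y | y.HasBoundary c (σ c)}, ∏ c, (y c).weight x :=
        Finset.sum_equiv colorSlices
          (fun HV => by simp [domainWall_iff_forall_hasBoundary, Fintype.mem_piFinset])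
          (fun HV _ => coloredConfigW_one x HV)
    _ = ∏ c, ∑ y : PathConfig n with y.HasBoundary c (σ c), y.weight x :=
        (Finset.prod_univ_sum _ _).symm
    _ = _ := Finset.prod_congr rfl fun c _ => sum_weight_hasBoundary x c (σ c)
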